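/- Let s₀, 𝜂 > 0 and let G be a 2π-periodic holomorphic function on 𝕋_{s₀}, real on reals, satisfying sup_{𝕋_{s₀}}|G(θ) + 𝜂 cos θ| ≤ 𝔠𝜂 for some 0 < 𝔠 ≤ (1/4)·min{1, s₀²}. Then G is (M,β,s₀)-Morse-non-degenerate with β = 𝜂/4 and M = 𝜂(𝔠 + cosh s₀) ≤ 𝜂(1/4 + cosh s₀). Moreover G has exactly two non-degenerate critical points per period (one maximum and one minimum). -/

import Mathlib

/-!
The perturbation `G + η cos` is at most `𝔠η` on the strip, so Cauchy's estimates on discs of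
radius `s₀` centred on `ℝ` give `|G' - η sin| ≤ η/4` and `|G'' - η cos| ≤ η/2` along `ℝ`; this is
where `4𝔠 ≤ min (s₀, s₀²)` enters. Hence `G'` vanishes only where `|sin| ≤ 1/4`, so `|cos| > 1/2`,
and there `G''` has the sign of `cos`. On each of the arcs `|θ| < π/3` and `|θ - π| < π/3` the
function `G'` is strictly monotone and changes sign, which gives exactly one minimum and one
maximum per period, whose values differ by about `η (cos θmin - cos θmax) > η`.
-/

noncomputable section

open Complex Set

/-- The complex strip of half-width `s` (a fundamental domain of the complexified torus `𝕋_s`). -/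
def Strip (s : ℝ) : Set ℂ := {z : ℂ | |z.im| < s}

open scoped Real Topology

lemma one_le_abs_sin_add_abs_cos (x : ℝ) : 1 ≤ |Real.sin x| + |Real.cos x| := by
  have h := Real.sin_sq_add_cos_sq x
  rw [← sq_abs (Real.sin x), ← sq_abs (Real.cos x)] at h
  nlinarith [abs_nonneg (Real.sin x), abs_nonneg (Real.cos x)]

lemma half_lt_cos_iff {x : ℝ} (hx : x ∈ Ioc (-π) π) :
    1 / 2 < Real.cos x ↔ x ∈ Ioo (-(π / 3)) (π / 3) := by
  have hx' : |x| ∈ Icc 0 π := ⟨abs_nonneg x, abs_le.2 ⟨hx.1.le, hx.2⟩⟩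
  rw [mem_Ioo, ← abs_lt, ← Real.cos_abs, ← Real.cos_pi_div_three]
  exact Real.strictAntiOn_cos.lt_iff_gt ⟨by positivity, by linarith [Real.pi_pos]⟩ hx'

structure IsSineLike (η : ℝ) (φ φ' : ℝ → ℝ) : Prop where
  hasDerivAt : ∀ x, HasDerivAt φ (φ' x) x
  abs_sub_sin_le : ∀ x, |φ x - η * Real.sin x| ≤ η / 4
  abs_sub_cos_le : ∀ x, |φ' x - η * Real.cos x| ≤ η / 2

namespace IsSineLike

variable {η : ℝ} {φ φ' : ℝ → ℝ}

lemma neg_comp_add_pi (h : IsSineLike η φ φ') :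
    IsSineLike η (fun x ↦ -φ (x + π)) (fun x ↦ -φ' (x + π)) where
  hasDerivAt x := ((h.hasDerivAt (x + π)).comp_add_const x π).neg
  abs_sub_sin_le x := by
    rw [← abs_neg]
    simpa [Real.sin_add_pi, neg_add_eq_sub, add_comm] using h.abs_sub_sin_le (x + π)
  abs_sub_cos_le x := by
    rw [← abs_neg]
    simpa [Real.cos_add_pi, neg_add_eq_sub, add_comm] using h.abs_sub_cos_le (x + π)

lemma half_lt_abs_cos_of_eq_zero (h : IsSineLike η φ φ') (hη : 0 < η) {x : ℝ} (hx : φ x = 0) :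
    1 / 2 < |Real.cos x| := by
  have hsin : η * |Real.sin x| ≤ η / 4 := by
    simpa [hx, abs_mul, abs_of_pos hη] using h.abs_sub_sin_le x
  have hsin' : |Real.sin x| ≤ 1 / 4 := by nlinarith
  have h1 := Real.sin_sq_add_cos_sq x
  rw [← sq_abs (Real.sin x), ← sq_abs (Real.cos x)] at h1
  nlinarith [abs_nonneg (Real.sin x), abs_nonneg (Real.cos x)]

lemma strictMonoOn (h : IsSineLike η φ φ') (hη : 0 < η) :
    StrictMonoOn φ (Icc (-(π / 3)) (π / 3)) := by
  refine strictMonoOn_of_deriv_pos (convex_Icc _ _)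
    (fun x _ ↦ (h.hasDerivAt x).continuousAt.continuousWithinAt) fun x hx ↦ ?_
  rw [interior_Icc] at hx
  have hcos : 1 / 2 < Real.cos x :=
    (half_lt_cos_iff ⟨by linarith [hx.1, Real.pi_pos], by linarith [hx.2, Real.pi_pos]⟩).2 hx
  rw [(h.hasDerivAt x).deriv]
  nlinarith [abs_le.1 (h.abs_sub_cos_le x)]

lemma existsUnique_zero (h : IsSineLike η φ φ') (hη : 0 < η) :
    ∃ a ∈ Ioo (-(π / 3)) (π / 3), φ a = 0 ∧
      ∀ x ∈ Ioo (-(π / 3)) (π / 3), φ x = 0 → x = a := by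
  have hneg : φ (-(π / 6)) < 0 := by
    have := abs_le.1 (h.abs_sub_sin_le (-(π / 6)))
    rw [Real.sin_neg, Real.sin_pi_div_six] at this
    linarith
  have hpos : 0 < φ (π / 6) := by
    have := abs_le.1 (h.abs_sub_sin_le (π / 6))
    rw [Real.sin_pi_div_six] at this
    linarith
  have hcont : ContinuousOn φ (Icc (-(π / 6)) (π / 6)) :=
    fun x _ ↦ (h.hasDerivAt x).continuousAt.continuousWithinAt
  obtain ⟨a, ha, ha0⟩ :=
    intermediate_value_Ioo (by linarith [Real.pi_pos]) hcont ⟨hneg, hpos⟩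
  have ha' : a ∈ Ioo (-(π / 3)) (π / 3) :=
    ⟨by linarith [ha.1, Real.pi_pos], by linarith [ha.2, Real.pi_pos]⟩
  exact ⟨a, ha', ha0, fun x hx hx0 ↦ (h.strictMonoOn hη).injOn (Ioo_subset_Icc_self hx)
    (Ioo_subset_Icc_self ha') (hx0.trans ha0.symm)⟩

lemma exists_two_zeros (h : IsSineLike η φ φ') (hη : 0 < η)
    (hper : Function.Periodic φ (2 * π)) :
    ∃ a b, a ∈ Ioc (-π) π ∧ b ∈ Ioc (-π) π ∧ φ a = 0 ∧ φ b = 0 ∧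
      1 / 2 < Real.cos a ∧ Real.cos b < -(1 / 2) ∧
      ∀ x ∈ Ioc (-π) π, φ x = 0 → x = a ∨ x = b := by
  have hπ := Real.pi_pos
  obtain ⟨a, ha, ha0, ha_uniq⟩ := h.existsUnique_zero hη
  obtain ⟨b', hb', hb'0, hb'_uniq⟩ := h.neg_comp_add_pi.existsUnique_zero hη
  have ha_mem : a ∈ Ioc (-π) π := ⟨by linarith [ha.1], by linarith [ha.2]⟩
  have hb'_mem : b' ∈ Ioc (-π) π := ⟨by linarith [hb'.1], by linarith [hb'.2]⟩
  have hb'_cos : Real.cos (b' + π) < -(1 / 2) := by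
    rw [Real.cos_add_pi, neg_lt_neg_iff]
    exact (half_lt_cos_iff hb'_mem).2 hb'
  -- A zero with negative cosine lies within `π / 3` of `π` or of `-π`; shifting it by `∓π`
  -- gives a zero of `x ↦ -φ (x + π)` within `π / 3` of `0`.
  have hzero : ∀ x ∈ Ioc (-π) π, φ x = 0 → x = a ∨ x = b' + π ∨ x = b' - π := by
    intro x hx hx0
    rcases lt_abs.1 (h.half_lt_abs_cos_of_eq_zero hη hx0) with hcos | hcos
    · exact Or.inl (ha_uniq x ((half_lt_cos_iff hx).1 hcos) hx0)
    right
    rcases lt_or_ge 0 x with hx_pos | hx_nonpos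
    · left
      have hmem : x - π ∈ Ioc (-π) π := ⟨by linarith, by linarith [hx.2]⟩
      have := hb'_uniq (x - π) ((half_lt_cos_iff hmem).1 (by rw [Real.cos_sub_pi]; linarith))
        (by simp [hx0])
      linarith
    · right
      have hmem : x + π ∈ Ioc (-π) π := ⟨by linarith [hx.1], by linarith⟩
      have := hb'_uniq (x + π) ((half_lt_cos_iff hmem).1 (by rw [Real.cos_add_pi]; linarith))
        (by simp only [add_assoc, ← two_mul, hper x, hx0, neg_zero])
      linarith
  have hφb' : φ (b' + π) = 0 := neg_eq_zero.1 hb'0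
  rcases le_or_gt b' 0 with hb'_nonpos | hb'_pos
  · refine ⟨a, b' + π, ha_mem, ⟨by linarith [hb'.1], by linarith⟩, ha0, hφb',
      (half_lt_cos_iff ha_mem).2 ha, hb'_cos, fun x hx hx0 ↦ ?_⟩
    rcases hzero x hx hx0 with h | h | h
    exacts [Or.inl h, Or.inr h, absurd hx.1 (by linarith)]
  · refine ⟨a, b' - π, ha_mem, ⟨by linarith, by linarith [hb'.2]⟩, ha0, ?_,
      (half_lt_cos_iff ha_mem).2 ha, ?_, fun x hx hx0 ↦ ?_⟩
    · rw [← hper, sub_add_eq_add_sub, two_mul, add_sub_assoc, add_sub_cancel_right]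
      exact hφb'
    · rwa [Real.cos_sub_pi, ← Real.cos_add_pi]
    rcases hzero x hx hx0 with h | h | h
    exacts [Or.inl h, absurd hx.2 (by linarith), Or.inr h]

end IsSineLike

lemma isOpen_strip (s : ℝ) : IsOpen (Strip s) :=
  isOpen_lt (continuous_abs.comp continuous_im) continuous_const

lemma ofReal_mem_strip {s : ℝ} (hs : 0 < s) (x : ℝ) : (x : ℂ) ∈ Strip s := by
  simpa [Strip] using hs

lemma closedBall_subset_strip {s r : ℝ} {z : ℂ} (h : |z.im| + r < s) :
    Metric.closedBall z r ⊆ Strip s := fun w hw ↦ by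
  have : |w.im - z.im| ≤ r := by
    simpa using (abs_im_le_norm (w - z)).trans (mem_closedBall_iff_norm.1 hw)
  show |w.im| < s
  linarith [abs_sub_abs_le_abs_sub w.im z.im]

lemma norm_iteratedDeriv_le_of_strip {s C r : ℝ} {f : ℂ → ℂ}
    (hf : DifferentiableOn ℂ f (Strip s)) (hC : ∀ z ∈ Strip s, ‖f z‖ ≤ C)
    {z : ℂ} (hr : 0 < r) (hzr : |z.im| + r ≤ s) (n : ℕ) :
    ‖iteratedDeriv n f z‖ ≤ n.factorial * C / r ^ n := by
  have hsmall : ∀ r' ∈ Ioo 0 r, ‖iteratedDeriv n f z‖ ≤ n.factorial * C / r' ^ n := by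
    rintro r' ⟨hr'0, hr'r⟩
    have hsub := closedBall_subset_strip (s := s) (z := z) (r := r') (by linarith)
    refine norm_iteratedDeriv_le_of_forall_mem_sphere_norm_le n hr'0 ?_
      fun w hw ↦ hC w (hsub (Metric.sphere_subset_closedBall hw))
    exact (hf.mono ((closure_ball z hr'0.ne').trans_subset hsub)).diffContOnCl
  have hlim : Filter.Tendsto (fun r' : ℝ ↦ n.factorial * C / r' ^ n) (𝓝[<] r)
      (𝓝 (n.factorial * C / r ^ n)) :=
    (continuousAt_const.div (continuous_pow n).continuousAt (pow_ne_zero n hr.ne')).tendsto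
      |>.mono_left nhdsWithin_le_nhds
  exact ge_of_tendsto hlim (Filter.eventually_of_mem (Ioo_mem_nhdsLT hr) hsmall)

lemma norm_cos_le_cosh_im (z : ℂ) : ‖cos z‖ ≤ Real.cosh z.im := by
  calc ‖cos z‖ = ‖exp (z * I) + exp (-z * I)‖ / 2 := by
        rw [Complex.cos, norm_div, Complex.norm_two]
    _ ≤ (‖exp (z * I)‖ + ‖exp (-z * I)‖) / 2 := by gcongr; exact norm_add_le _ _
    _ = Real.cosh z.im := by simp [Complex.norm_exp, Real.cosh_eq, add_comm]

/-- `Im f = Re (-I * f)` vanishes along `ℝ`, and `HasDerivAt.real_of_complex` differentiates it. -/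
lemma im_deriv_ofReal_eq_zero {f : ℂ → ℂ} (hreal : ∀ y : ℝ, (f y).im = 0) {x : ℝ}
    (hf : DifferentiableAt ℂ f x) : (deriv f x).im = 0 := by
  have h := (hf.hasDerivAt.const_mul (-I)).real_of_complex
  have hzero : (fun y : ℝ ↦ (-I * f y).re) = fun _ ↦ 0 := by
    ext y
    simp [hreal y]
  rw [hzero] at h
  simpa using ((hasDerivAt_const (x : ℝ) (0 : ℝ)).unique h).symm

lemma Function.Periodic.deriv {𝕜 F : Type*} [NontriviallyNormedField 𝕜] [NormedAddCommGroup F]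
    [NormedSpace 𝕜 F] {f : 𝕜 → F} {p : 𝕜} (hf : Function.Periodic f p) :
    Function.Periodic (deriv f) p := fun z ↦ by
  rw [← deriv_comp_add_const, funext hf]

lemma iteratedDeriv_add_mul_cos {f : ℂ → ℂ} {z : ℂ} (hf : AnalyticAt ℂ f z) (η : ℂ) (n : ℕ) :
    iteratedDeriv n (fun w ↦ f w + η * cos w) z =
      iteratedDeriv n f z + η * iteratedDeriv n cos z := by
  rw [iteratedDeriv_fun_add hf.contDiffAt (contDiffAt_const.mul contDiff_cos.contDiffAt),
    iteratedDeriv_const_mul_field]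

lemma norm_iteratedDeriv_add_mul_iteratedDeriv_cos_le {s η C : ℝ} {G : ℂ → ℂ} (hs : 0 < s)
    (hG : DifferentiableOn ℂ G (Strip s)) (hC : ∀ z ∈ Strip s, ‖G z + η * cos z‖ ≤ C)
    (x : ℝ) (n : ℕ) :
    ‖iteratedDeriv n G x + η * iteratedDeriv n cos x‖ ≤ n.factorial * C / s ^ n := by
  rw [← iteratedDeriv_add_mul_cos
    (hG.analyticOnNhd (isOpen_strip s) x (ofReal_mem_strip hs x))]
  exact norm_iteratedDeriv_le_of_strip (hG.add (differentiable_cos.const_mul _).differentiableOn)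
    hC hs (by simp) n

lemma four_mul_le_of_le_min {c s : ℝ} (hs : 0 < s) (hc : c ≤ 1 / 4 * min 1 (s ^ 2)) :
    4 * c ≤ s ∧ 4 * c ≤ s ^ 2 := by
  have h1 := hc.trans (mul_le_mul_of_nonneg_left (min_le_left 1 (s ^ 2)) (by norm_num))
  have h2 := hc.trans (mul_le_mul_of_nonneg_left (min_le_right 1 (s ^ 2)) (by norm_num))
  refine ⟨?_, by linarith⟩
  rcases le_total s 1 with hs1 | hs1 <;> nlinarith

section Perturbation

variable {s η c : ℝ} {G : ℂ → ℂ}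

lemma norm_deriv_sub_mul_sin_le (hs : 0 < s) (hη : 0 < η) (hc : c ≤ 1 / 4 * min 1 (s ^ 2))
    (hG : DifferentiableOn ℂ G (Strip s)) (hC : ∀ z ∈ Strip s, ‖G z + η * cos z‖ ≤ c * η)
    (x : ℝ) : ‖deriv G x - η * sin x‖ ≤ η / 4 := by
  have h := norm_iteratedDeriv_add_mul_iteratedDeriv_cos_le hs hG hC x 1
  simp only [iteratedDeriv_one, Nat.factorial_one, Nat.cast_one, one_mul, pow_one,
    Complex.deriv_cos', mul_neg, ← sub_eq_add_neg] at h
  refine h.trans ((div_le_iff₀ hs).2 ?_)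
  nlinarith [(four_mul_le_of_le_min hs hc).1]

lemma norm_iteratedDeriv_two_sub_mul_cos_le (hs : 0 < s) (hη : 0 < η)
    (hc : c ≤ 1 / 4 * min 1 (s ^ 2))
    (hG : DifferentiableOn ℂ G (Strip s)) (hC : ∀ z ∈ Strip s, ‖G z + η * cos z‖ ≤ c * η)
    (x : ℝ) : ‖iteratedDeriv 2 G x - η * cos x‖ ≤ η / 2 := by
  have h := norm_iteratedDeriv_add_mul_iteratedDeriv_cos_le hs hG hC x 2
  simp only [iteratedDeriv_add_one_cos, iteratedDeriv_one, Complex.deriv_sin, Pi.neg_apply,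
    mul_neg, ← sub_eq_add_neg, Nat.factorial_two, Nat.cast_ofNat] at h
  refine h.trans ((div_le_iff₀ (by positivity)).2 ?_)
  nlinarith [(four_mul_le_of_le_min hs hc).2]

lemma isSineLike_re_deriv (hs : 0 < s) (hη : 0 < η) (hc : c ≤ 1 / 4 * min 1 (s ^ 2))
    (hG : DifferentiableOn ℂ G (Strip s)) (hC : ∀ z ∈ Strip s, ‖G z + η * cos z‖ ≤ c * η) :
    IsSineLike η (fun x : ℝ ↦ (deriv G x).re) (fun x : ℝ ↦ (iteratedDeriv 2 G x).re) where
  hasDerivAt x := by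
    rw [iteratedDeriv_succ, iteratedDeriv_one]
    exact ((hG.analyticOnNhd (isOpen_strip s)).deriv x (ofReal_mem_strip hs x)).differentiableAt
      |>.hasDerivAt.real_of_complex
  abs_sub_sin_le x := by
    refine le_trans (le_of_eq ?_)
      ((abs_re_le_norm _).trans (norm_deriv_sub_mul_sin_le hs hη hc hG hC x))
    simp [← ofReal_sin]
  abs_sub_cos_le x := by
    refine le_trans (le_of_eq ?_)
      ((abs_re_le_norm _).trans (norm_iteratedDeriv_two_sub_mul_cos_le hs hη hc hG hC x))
    simp [← ofReal_cos]

end Perturbation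

lemma norm_le_of_norm_add_mul_cos_le {s η C : ℝ} {w z : ℂ} (hη : 0 ≤ η) (hz : z ∈ Strip s)
    (h : ‖w + η * cos z‖ ≤ C) : ‖w‖ ≤ C + η * Real.cosh s := by
  have hcos : ‖cos z‖ ≤ Real.cosh s :=
    (norm_cos_le_cosh_im z).trans (Real.cosh_le_cosh.2 (hz.le.trans (le_abs_self s)))
  calc ‖w‖ ≤ ‖w + η * cos z‖ + ‖(η : ℂ) * cos z‖ := norm_le_add_norm_add w _
    _ ≤ C + η * Real.cosh s := by
      rw [norm_mul, norm_real, Real.norm_of_nonneg hη]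
      gcongr

lemma div_four_le_norm_add_norm {η x : ℝ} {u v : ℂ} (hη : 0 < η)
    (hu : ‖u - η * sin x‖ ≤ η / 4) (hv : ‖v - η * cos x‖ ≤ η / 2) : η / 4 ≤ ‖u‖ + ‖v‖ := by
  have hsin : ‖(η : ℂ) * sin x‖ = η * |Real.sin x| := by simp [← ofReal_sin, abs_of_pos hη]
  have hcos : ‖(η : ℂ) * cos x‖ = η * |Real.cos x| := by simp [← ofReal_cos, abs_of_pos hη]
  nlinarith [one_le_abs_sin_add_abs_cos x, norm_le_norm_add_norm_sub u (η * sin x),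
    norm_le_norm_add_norm_sub v (η * cos x)]

lemma div_four_le_norm_sub {η c a b : ℝ} {u v : ℂ} (hη : 0 < η) (hc : c ≤ 1 / 4)
    (hu : ‖u + η * cos a‖ ≤ c * η) (hv : ‖v + η * cos b‖ ≤ c * η)
    (ha : 1 / 2 < Real.cos a) (hb : Real.cos b < -(1 / 2)) : η / 4 ≤ ‖v - u‖ := by
  have hu' := abs_le.1 ((abs_re_le_norm _).trans hu)
  have hv' := abs_le.1 ((abs_re_le_norm _).trans hv)
  simp only [add_re, re_ofReal_mul, cos_ofReal_re] at hu' hv'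
  have hre := re_le_norm (v - u)
  rw [sub_re] at hre
  nlinarith

theorem statement_18_general (s₀ et c : ℝ) (hs : 0 < s₀) (het : 0 < et)
    (hc : c ≤ 1 / 4 * min 1 (s₀ ^ 2))
    (G : ℂ → ℂ)
    (hGhol : DifferentiableOn ℂ G (Strip s₀))
    (hGper : ∀ z : ℂ, G (z + 2 * Real.pi) = G z)
    (hGreal : ∀ x : ℝ, (G (x : ℂ)).im = 0)
    (hGclose : ∀ z ∈ Strip s₀, ‖G z + et * Complex.cos z‖ ≤ c * et) :
    -- the Morse bound `M = 𝜂(𝔠 + cosh s₀) ≤ 𝜂(1/4 + cosh s₀)`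
    (∀ z ∈ Strip s₀, ‖G z‖ ≤ et * (c + Real.cosh s₀)) ∧
    et * (c + Real.cosh s₀) ≤ et * (1 / 4 + Real.cosh s₀) ∧
    -- the non-degeneracy bound `β = 𝜂/4`
    (∀ x : ℝ, et / 4 ≤ ‖deriv G (x : ℂ)‖ +
      ‖iteratedDeriv 2 G (x : ℂ)‖) ∧
    -- exactly two non-degenerate critical points per period, with separated critical values
    ∃ θmin θmax : ℝ,
      θmin ∈ Set.Ioc (-Real.pi) Real.pi ∧ θmax ∈ Set.Ioc (-Real.pi) Real.pi ∧
      θmin ≠ θmax ∧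
      deriv G (θmin : ℂ) = 0 ∧ deriv G (θmax : ℂ) = 0 ∧
      0 < (iteratedDeriv 2 G (θmin : ℂ)).re ∧ (iteratedDeriv 2 G (θmax : ℂ)).re < 0 ∧
      et / 4 ≤ ‖G (θmax : ℂ) - G (θmin : ℂ)‖ ∧
      ∀ x ∈ Set.Ioc (-Real.pi) Real.pi,
        deriv G ((x : ℝ) : ℂ) = 0 → x = θmin ∨ x = θmax := by
  have hc₄ : c ≤ 1 / 4 := hc.trans (by linarith [min_le_left (1 : ℝ) (s₀ ^ 2)])
  have hφ := isSineLike_re_deriv hs het hc hGhol hGclose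
  have hper : Function.Periodic (fun x : ℝ ↦ (deriv G x).re) (2 * π) := fun x ↦ by
    simpa using congrArg re (Function.Periodic.deriv hGper x)
  have hcrit : ∀ x : ℝ, deriv G x = 0 ↔ (deriv G x).re = 0 := fun x ↦ by
    rw [Complex.ext_iff, im_deriv_ofReal_eq_zero hGreal
      ((hGhol.analyticOnNhd (isOpen_strip s₀)) x (ofReal_mem_strip hs x)).differentiableAt]
    simp
  obtain ⟨a, b, ha, hb, ha₀, hb₀, hcos_a, hcos_b, huniq⟩ := hφ.exists_two_zeros het hper
  have hmin : 0 < (iteratedDeriv 2 G a).re := by nlinarith [abs_le.1 (hφ.abs_sub_cos_le a)]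
  have hmax : (iteratedDeriv 2 G b).re < 0 := by nlinarith [abs_le.1 (hφ.abs_sub_cos_le b)]
  refine ⟨fun z hz ↦ ?_, by gcongr, fun x ↦ div_four_le_norm_add_norm het
      (norm_deriv_sub_mul_sin_le hs het hc hGhol hGclose x)
      (norm_iteratedDeriv_two_sub_mul_cos_le hs het hc hGhol hGclose x),
    a, b, ha, hb, fun hab ↦ by linarith [hab ▸ hcos_a], (hcrit a).2 ha₀, (hcrit b).2 hb₀,
    hmin, hmax, div_four_le_norm_sub het hc₄ (hGclose a (ofReal_mem_strip hs a))
      (hGclose b (ofReal_mem_strip hs b)) hcos_a hcos_b,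
    fun x hx hx₀ ↦ huniq x hx ((hcrit x).1 hx₀)⟩
  linarith [norm_le_of_norm_add_mul_cos_le het.le hz (hGclose z hz)]

/-- Lemma `sibillini`: a `2π`-periodic real-analytic function `G` with
`sup_{𝕋_{s₀}}|G(θ) + 𝜂 cos θ| ≤ 𝔠𝜂`, `0 < 𝔠 ≤ (1/4)min{1,s₀²}`, is
`(𝜂(𝔠 + cosh s₀), 𝜂/4, s₀)`-Morse-non-degenerate and has exactly two (non-degenerate)
critical points per period, a maximum and a minimum. -/
theorem statement_18 (s₀ et c : ℝ) (hs : 0 < s₀) (het : 0 < et)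
    (hc0 : 0 < c) (hc : c ≤ 1 / 4 * min 1 (s₀ ^ 2))
    (G : ℂ → ℂ)
    (hGhol : DifferentiableOn ℂ G (Strip s₀))
    (hGper : ∀ z : ℂ, G (z + 2 * Real.pi) = G z)
    (hGreal : ∀ x : ℝ, (G (x : ℂ)).im = 0)
    (hGclose : ∀ z ∈ Strip s₀, ‖G z + et * Complex.cos z‖ ≤ c * et) :
    -- the Morse bound `M = 𝜂(𝔠 + cosh s₀) ≤ 𝜂(1/4 + cosh s₀)`
    (∀ z ∈ Strip s₀, ‖G z‖ ≤ et * (c + Real.cosh s₀)) ∧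
    et * (c + Real.cosh s₀) ≤ et * (1 / 4 + Real.cosh s₀) ∧
    -- the non-degeneracy bound `β = 𝜂/4`
    (∀ x : ℝ, et / 4 ≤ ‖deriv G (x : ℂ)‖ +
      ‖iteratedDeriv 2 G (x : ℂ)‖) ∧
    -- exactly two non-degenerate critical points per period, with separated critical values
    ∃ θmin θmax : ℝ,
      θmin ∈ Set.Ioc (-Real.pi) Real.pi ∧ θmax ∈ Set.Ioc (-Real.pi) Real.pi ∧
      θmin ≠ θmax ∧
      deriv G (θmin : ℂ) = 0 ∧ deriv G (θmax : ℂ) = 0 ∧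
      0 < (iteratedDeriv 2 G (θmin : ℂ)).re ∧ (iteratedDeriv 2 G (θmax : ℂ)).re < 0 ∧
      et / 4 ≤ ‖G (θmax : ℂ) - G (θmin : ℂ)‖ ∧
      ∀ x ∈ Set.Ioc (-Real.pi) Real.pi,
        deriv G ((x : ℝ) : ℂ) = 0 → x = θmin ∨ x = θmax :=
  statement_18_general s₀ et c hs het hc G hGhol hGper hGreal hGclose
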